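/- Fix λ : ℕ with λ ≥ 1, a finite type Y, and a function f : (Fin λ → Bool) → Y. Define qpk ∈ EuclideanSpace ℂ ((Fin λ → Bool) × Y) by qpk(x,y) = 2^{-λ/2} if y = f x and 0 otherwise, and for x* : Fin λ → Bool define qpk' by qpk'(x,y) = (2^λ − 1)^{-1/2} if x ≠ x* and y = f x, and 0 otherwise. Then for every natural number p, the trace distance between the pure states qpk^{⊗p} and qpk'^{⊗p} (half the sum of the absolute values of the eigenvalues of |qpk^{⊗p}⟩⟨qpk^{⊗p}| − |qpk'^{⊗p}⟩⟨qpk'^{⊗p}|) equals Real.sqrt(1 − (1 − 2^{-λ})^p) and is at most Real.sqrt p · 2^{-λ/2}. -/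

import Mathlib

/-!
Both keys are real unit vectors supported on the graph of `f`, with overlap
`⟨qpk, qpk'⟩ = √(1 - 2^{-λ})`, and overlaps of tensor powers multiply, so the two `p`-fold states
have overlap `c = (1 - 2^{-λ})^{p/2}`. The difference of two pure-state projectors has rank at
most two and trace zero, so its nonzero eigenvalues are `±μ`, and `2μ² = tr (M²) = 2 - 2|c|²`;
hence the trace distance is `√(1 - |c|²)`. Bernoulli's inequality `(1 - x)^p ≥ 1 - p x` gives the
bound `√p · 2^{-λ/2}`.
-/

/-- The `p`-fold tensor power of `ψ : EuclideanSpace ℂ α`. -/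
noncomputable def tensorPow {α : Type} [Fintype α] (ψ : EuclideanSpace ℂ α) (p : ℕ) :
    EuclideanSpace ℂ (Fin p → α) :=
  WithLp.toLp 2 (fun a => ∏ i, ψ (a i))

/-- The quantum public key `2^{-λ/2} ∑_{x ∈ {0,1}^λ} |x⟩|f(x)⟩`. -/
noncomputable def qpk (lam : ℕ) (Y : Type) [Fintype Y] [DecidableEq Y]
    (f : (Fin lam → Bool) → Y) : EuclideanSpace ℂ ((Fin lam → Bool) × Y) :=
  WithLp.toLp 2 (fun p => if p.2 = f p.1 then (((1 / Real.sqrt 2) ^ lam : ℝ) : ℂ) else 0)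

/-- The public key punctured at `x*`: drops the branch `x*` and renormalizes. -/
noncomputable def qpkPunc (lam : ℕ) (Y : Type) [Fintype Y] [DecidableEq Y]
    (f : (Fin lam → Bool) → Y) (xstar : Fin lam → Bool) :
    EuclideanSpace ℂ ((Fin lam → Bool) × Y) :=
  WithLp.toLp 2 (fun p => if p.1 ≠ xstar ∧ p.2 = f p.1
    then (((Real.sqrt ((2 : ℝ) ^ lam - 1))⁻¹ : ℝ) : ℂ) else 0)

open Matrix

theorem Finset.sum_abs_eq_sqrt_of_card_le_two {ι : Type*} {s : Finset ι} {g : ι → ℝ}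
    (hs : s.card ≤ 2) (h0 : ∑ i ∈ s, g i = 0) :
    ∑ i ∈ s, |g i| = √(2 * ∑ i ∈ s, g i ^ 2) := by
  obtain h | h | h : s.card = 0 ∨ s.card = 1 ∨ s.card = 2 := by omega
  · simp [Finset.card_eq_zero.mp h]
  · obtain ⟨i, rfl⟩ := Finset.card_eq_one.mp h
    simp_all
  · classical
    obtain ⟨i, j, hij, rfl⟩ := Finset.card_eq_two.mp h
    rw [Finset.sum_pair hij] at h0
    rw [Finset.sum_pair hij, Finset.sum_pair hij, eq_neg_of_add_eq_zero_right h0, abs_neg,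
      neg_sq, show 2 * (g i ^ 2 + g i ^ 2) = (2 * |g i|) ^ 2 by rw [mul_pow, sq_abs]; ring,
      Real.sqrt_sq (by positivity)]
    ring

theorem Fintype.sum_abs_eq_sqrt_of_card_ne_zero_le_two {ι : Type*} [Fintype ι] {g : ι → ℝ}
    (hg : Fintype.card {i // g i ≠ 0} ≤ 2) (h0 : ∑ i, g i = 0) :
    ∑ i, |g i| = √(2 * ∑ i, g i ^ 2) := by
  classical
  have hsupp {F : ℝ → ℝ} (hF : ∀ x, F x ≠ 0 → x ≠ 0) :
      ∑ i with g i ≠ 0, F (g i) = ∑ i, F (g i) :=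
    Finset.sum_filter_of_ne fun i _ => hF (g i)
  rw [← hsupp (F := fun x => x) fun _ => id] at h0
  rw [← hsupp (F := (|·|)) fun _ => abs_ne_zero.mp,
    ← hsupp (F := (· ^ 2)) fun _ => (pow_ne_zero_iff two_ne_zero).mp]
  exact Finset.sum_abs_eq_sqrt_of_card_le_two (by rwa [← Fintype.card_subtype]) h0

theorem Fintype.sum_ite_ne {X R : Type*} [Fintype X] [DecidableEq X] [Ring R] (x₀ : X)
    (a : R) : ∑ x, (if x ≠ x₀ then a else 0) = ((Fintype.card X : R) - 1) * a := by
  simp [ite_not, Finset.sum_ite, Finset.filter_ne', Finset.card_erase_of_mem, sub_mul,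
    Nat.cast_pred (Fintype.card_pos_iff.mpr ⟨x₀⟩)]

theorem Real.sqrt_one_sub_one_sub_pow_le {x : ℝ} (hx : x ≤ 2) (p : ℕ) :
    √(1 - (1 - x) ^ p) ≤ √p * √x := by
  have hbernoulli : 1 - p * x ≤ (1 - x) ^ p := by
    simpa [sub_eq_add_neg] using one_add_mul_le_pow (a := -x) (by linarith) p
  rw [← Real.sqrt_mul p.cast_nonneg]
  exact Real.sqrt_le_sqrt (by linarith)

theorem Matrix.IsHermitian.trace_mul_self_eq_sum_sq_eigenvalues {𝕜 n : Type*} [RCLike 𝕜]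
    [Fintype n] [DecidableEq n] {A : Matrix n n 𝕜} (hA : A.IsHermitian) :
    (A * A).trace = ∑ i, ((hA.eigenvalues i ^ 2 : ℝ) : 𝕜) := by
  conv_lhs => rw [hA.spectral_theorem, ← map_mul, Unitary.conjStarAlgAut_apply, trace_mul_cycle,
    Unitary.coe_star_mul_self, one_mul, diagonal_mul_diagonal, trace_diagonal]
  simp [sq]

theorem Matrix.rank_vecMulVec_sub_vecMulVec_le {ι R : Type*} [Fintype ι] [CommRing R]
    [StrongRankCondition R] (a b c d : ι → R) :
    (vecMulVec a b - vecMulVec c d).rank ≤ 2 := by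
  have hfactor : vecMulVec a b - vecMulVec c d =
      (of fun i k => ![a i, c i] k) * of fun k j => ![b j, -d j] k := by
    ext i j
    simp [mul_apply, Fin.sum_univ_two, vecMulVec_apply, sub_eq_add_neg]
  rw [hfactor]
  exact (rank_mul_le_left _ _).trans ((rank_le_card_width _).trans_eq (Fintype.card_fin 2))

theorem Matrix.isHermitian_vecMulVec_star {𝕜 ι : Type*} [RCLike 𝕜] (ψ : ι → 𝕜) :
    (vecMulVec ψ (star ψ)).IsHermitian := by
  rw [IsHermitian, conjTranspose_vecMulVec, star_star]

theorem norm_eq_one_of_inner_self_eq_one {𝕜 E : Type*} [RCLike 𝕜] [NormedAddCommGroup E]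
    [InnerProductSpace 𝕜 E] {x : E} (hx : inner 𝕜 x x = 1) : ‖x‖ = 1 := by
  have h := inner_self_eq_norm_sq (𝕜 := 𝕜) x
  rw [hx, RCLike.one_re] at h
  exact (pow_eq_one_iff_of_nonneg (norm_nonneg x) two_ne_zero).mp h.symm

section PureStates

variable {𝕜 ι : Type*} [RCLike 𝕜] [Fintype ι]

theorem trace_vecMulVec_star_mul_vecMulVec_star (ψ φ : EuclideanSpace 𝕜 ι) :
    (vecMulVec ψ (star ψ) * vecMulVec φ (star φ)).trace = ((‖inner 𝕜 ψ φ‖ ^ 2 : ℝ) : 𝕜) := by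
  rw [vecMulVec_mul_vecMulVec, trace_vecMulVec, dotProduct_smul, smul_eq_mul,
    dotProduct_comm (star _), ← EuclideanSpace.inner_eq_star_dotProduct,
    ← EuclideanSpace.inner_eq_star_dotProduct, ← inner_conj_symm φ ψ, RCLike.mul_conj]
  push_cast
  rfl

theorem sum_abs_eigenvalues_vecMulVec_star_sub [DecidableEq ι] {ψ φ : EuclideanSpace 𝕜 ι}
    (hψ : ‖ψ‖ = 1) (hφ : ‖φ‖ = 1)
    (hM : (vecMulVec ψ (star ψ) - vecMulVec φ (star φ)).IsHermitian) :
    ∑ i, |hM.eigenvalues i| = 2 * √(1 - ‖inner 𝕜 ψ φ‖ ^ 2) := by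
  have hself {χ : EuclideanSpace 𝕜 ι} (hχ : ‖χ‖ = 1) : (χ : ι → 𝕜) ⬝ᵥ star χ = 1 := by
    rw [← EuclideanSpace.inner_eq_star_dotProduct, inner_self_eq_norm_sq_to_K, hχ]
    simp
  have hsum : ∑ i, hM.eigenvalues i = 0 := by
    have h := hM.trace_eq_sum_eigenvalues
    rw [trace_sub, trace_vecMulVec, trace_vecMulVec, hself hψ, hself hφ, sub_self] at h
    exact_mod_cast h.symm
  have hsum_sq : ∑ i, hM.eigenvalues i ^ 2 = 2 - 2 * ‖inner 𝕜 ψ φ‖ ^ 2 := by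
    have h := hM.trace_mul_self_eq_sum_sq_eigenvalues
    simp only [sub_mul, mul_sub, trace_sub, trace_vecMulVec_star_mul_vecMulVec_star,
      norm_inner_symm φ ψ, inner_self_eq_norm_sq_to_K, hψ, hφ] at h
    apply_fun RCLike.re at h
    simp only [map_sub, RCLike.ofReal_re, map_sum] at h
    norm_num at h
    linarith
  have hrank : Fintype.card {i // hM.eigenvalues i ≠ 0} ≤ 2 :=
    hM.rank_eq_card_non_zero_eigs ▸ rank_vecMulVec_sub_vecMulVec_le _ _ _ _
  rw [Fintype.sum_abs_eq_sqrt_of_card_ne_zero_le_two hrank hsum, hsum_sq,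
    show 2 * (2 - 2 * ‖inner 𝕜 ψ φ‖ ^ 2) = 2 ^ 2 * (1 - ‖inner 𝕜 ψ φ‖ ^ 2) by ring,
    Real.sqrt_mul (by positivity), Real.sqrt_sq zero_le_two]

end PureStates

theorem inner_tensorPow {α : Type} [Fintype α] (ψ φ : EuclideanSpace ℂ α) (p : ℕ) :
    inner ℂ (tensorPow ψ p) (tensorPow φ p) = inner ℂ ψ φ ^ p := by
  simp only [EuclideanSpace.inner_eq_star_dotProduct, dotProduct, tensorPow, Pi.star_apply,
    Fintype.sum_pow, star_prod, Finset.prod_mul_distrib]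

theorem norm_tensorPow {α : Type} [Fintype α] (ψ : EuclideanSpace ℂ α) (p : ℕ) :
    ‖tensorPow ψ p‖ = ‖ψ‖ ^ p := by
  have h := inner_tensorPow ψ ψ p
  rw [inner_self_eq_norm_sq_to_K, inner_self_eq_norm_sq_to_K, ← pow_mul, mul_comm, pow_mul] at h
  exact (pow_left_inj₀ (norm_nonneg _) (by positivity) two_ne_zero).mp (by exact_mod_cast h)

def graphState {X Y : Type} [DecidableEq Y] (f : X → Y) (c : X → ℝ) :
    EuclideanSpace ℂ (X × Y) :=
  WithLp.toLp 2 fun z => if z.2 = f z.1 then (c z.1 : ℂ) else 0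

theorem inner_graphState {X Y : Type} [Fintype X] [Fintype Y] [DecidableEq Y] (f : X → Y)
    (c d : X → ℝ) :
    inner ℂ (graphState f c) (graphState f d) = ((∑ x, c x * d x : ℝ) : ℂ) := by
  simp [graphState, EuclideanSpace.inner_toLp_toLp, dotProduct, Fintype.sum_prod_type,
    apply_ite, mul_comm]

section PublicKey

variable {lam : ℕ} {Y : Type} [Fintype Y] [DecidableEq Y] (f : (Fin lam → Bool) → Y)

theorem qpk_eq_graphState :
    qpk lam Y f = graphState f fun _ => (1 / √2) ^ lam := rfl

theorem qpkPunc_eq_graphState (xstar : Fin lam → Bool) :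
    qpkPunc lam Y f xstar =
      graphState f fun x => if x ≠ xstar then (√((2 : ℝ) ^ lam - 1))⁻¹ else 0 := by
  simp only [qpkPunc, graphState, apply_ite ((↑) : ℝ → ℂ), Complex.ofReal_zero, ← ite_and,
    and_comm]

omit [Fintype Y] [DecidableEq Y] in
theorem one_div_sqrt_two_pow_sq : ((1 / √2) ^ lam) ^ 2 = (1 / 2 : ℝ) ^ lam := by
  rw [← pow_mul, mul_comm, pow_mul, div_pow, one_pow, Real.sq_sqrt zero_le_two]

omit [Fintype Y] [DecidableEq Y] in
theorem inv_sqrt_two_pow_sub_one_sq : (√((2 : ℝ) ^ lam - 1))⁻¹ ^ 2 = ((2 : ℝ) ^ lam - 1)⁻¹ := by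
  rw [inv_pow, Real.sq_sqrt (sub_nonneg.mpr (one_le_pow₀ one_le_two))]

theorem norm_qpk : ‖qpk lam Y f‖ = 1 := by
  refine norm_eq_one_of_inner_self_eq_one (𝕜 := ℂ) ?_
  rw [qpk_eq_graphState, inner_graphState, Complex.ofReal_eq_one, Finset.sum_const,
    Finset.card_univ, ← sq, one_div_sqrt_two_pow_sq]
  simp

theorem norm_qpkPunc (hlam : 1 ≤ lam) (xstar : Fin lam → Bool) :
    ‖qpkPunc lam Y f xstar‖ = 1 := by
  refine norm_eq_one_of_inner_self_eq_one (𝕜 := ℂ) ?_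
  rw [qpkPunc_eq_graphState, inner_graphState, Complex.ofReal_eq_one]
  simp only [← sq, ite_pow, inv_sqrt_two_pow_sub_one_sq, zero_pow two_ne_zero,
    Fintype.sum_ite_ne, Fintype.card_fun, Fintype.card_bool, Fintype.card_fin, Nat.cast_pow,
    Nat.cast_ofNat]
  exact mul_inv_cancel₀ (sub_ne_zero.mpr (one_lt_pow₀ one_lt_two (by omega)).ne')

theorem norm_inner_qpk_qpkPunc_sq (xstar : Fin lam → Bool) :
    ‖inner ℂ (qpk lam Y f) (qpkPunc lam Y f xstar)‖ ^ 2 = 1 - (1 / 2) ^ lam := by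
  rw [qpk_eq_graphState, qpkPunc_eq_graphState, inner_graphState]
  simp only [mul_ite, mul_zero, Fintype.sum_ite_ne, Complex.norm_real, Real.norm_eq_abs, sq_abs,
    mul_pow, one_div_sqrt_two_pow_sq, inv_sqrt_two_pow_sub_one_sq, Fintype.card_fun,
    Fintype.card_bool, Fintype.card_fin, Nat.cast_pow, Nat.cast_ofNat]
  field_simp
  rw [sub_mul, ← mul_pow]
  norm_num

end PublicKey

theorem stmt9 (lam : ℕ) (hlam : 1 ≤ lam) (Y : Type) [Fintype Y] [DecidableEq Y]
    (f : (Fin lam → Bool) → Y) (xstar : Fin lam → Bool) (p : ℕ) :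
    ∃ hM : (Matrix.of fun a b : Fin p → (Fin lam → Bool) × Y =>
        tensorPow (qpk lam Y f) p a *
            (starRingEnd ℂ) (tensorPow (qpk lam Y f) p b) -
          tensorPow (qpkPunc lam Y f xstar) p a *
            (starRingEnd ℂ) (tensorPow (qpkPunc lam Y f xstar) p b)).IsHermitian,
      (1 / 2 * ∑ i, |hM.eigenvalues i| =
        Real.sqrt (1 - (1 - (1 / 2 : ℝ) ^ lam) ^ p)) ∧
      (1 / 2 * ∑ i, |hM.eigenvalues i| ≤
        Real.sqrt p * (1 / Real.sqrt 2) ^ lam) := by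
  set ψ := tensorPow (qpk lam Y f) p
  set φ := tensorPow (qpkPunc lam Y f xstar) p
  -- The matrix of the statement is `vecMulVec ψ (star ψ) - vecMulVec φ (star φ)` by `rfl`.
  have hM := (isHermitian_vecMulVec_star (ψ : _ → ℂ)).sub (isHermitian_vecMulVec_star φ)
  have hdist : 1 / 2 * ∑ i, |hM.eigenvalues i| = √(1 - (1 - (1 / 2 : ℝ) ^ lam) ^ p) := by
    rw [sum_abs_eigenvalues_vecMulVec_star_sub (by rw [norm_tensorPow, norm_qpk, one_pow])
      (by rw [norm_tensorPow, norm_qpkPunc f hlam, one_pow]), inner_tensorPow, norm_pow,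
      pow_right_comm, norm_inner_qpk_qpkPunc_sq]
    ring
  have hsmall : (1 / 2 : ℝ) ^ lam ≤ 2 := (pow_le_one₀ (by norm_num) (by norm_num)).trans one_le_two
  refine ⟨hM, hdist, hdist ▸ ?_⟩
  calc √(1 - (1 - (1 / 2 : ℝ) ^ lam) ^ p) ≤ √p * √((1 / 2) ^ lam) :=
        Real.sqrt_one_sub_one_sub_pow_le hsmall p
    _ = √p * (1 / √2) ^ lam := by rw [← one_div_sqrt_two_pow_sq, Real.sqrt_sq (by positivity)]
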